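/- arXiv:2408.11637 — 3 statements merged into one kernel-verified Lean document; each statement's English description precedes it below -/
import Mathlib

section
/- Let b > 0 and a₁, a₂ ∈ ℝ, and for c ∈ ℝ let μ_c denote the measure on ℝ having density x ↦ (2b)⁻¹·exp(−|x − c|/b) with respect to Lebesgue measure (the Laplace distribution with scale b centered at c). Then for every measurable set S ⊆ ℝ, μ_{a₁}(S) ≤ exp(|a₁ − a₂|/b)·μ_{a₂}(S). -/
/-! Moving the centre of the Laplace density by `a₁ - a₂` changes it by a factor of at most
`exp(|a₁ - a₂|/b)`, by the triangle inequality in the exponent; integrating this pointwise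
bound over any set gives the bound for the measures. -/

open MeasureTheory

/-- The Laplace distribution centered at `c` with scale `b`: the measure on `ℝ` with
density `x ↦ (2b)⁻¹ · exp(−|x − c|/b)` with respect to Lebesgue measure. -/
noncomputable def lapCentered (b c : ℝ) : Measure ℝ :=
  volume.withDensity (fun x => ENNReal.ofReal ((2 * b)⁻¹ * Real.exp (-|x - c| / b)))

theorem Real.exp_neg_abs_sub_div_le {b : ℝ} (hb : 0 ≤ b) (a₁ a₂ x : ℝ) :
    Real.exp (-|x - a₁| / b) ≤ Real.exp (|a₁ - a₂| / b) * Real.exp (-|x - a₂| / b) := by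
  rw [← Real.exp_add, Real.exp_le_exp, ← add_div]
  gcongr
  linarith [abs_sub_le x a₁ a₂]

theorem lapCentered_le_smul {b : ℝ} (hb : 0 ≤ b) (a₁ a₂ : ℝ) :
    lapCentered b a₁ ≤ ENNReal.ofReal (Real.exp (|a₁ - a₂| / b)) • lapCentered b a₂ := by
  rw [lapCentered, lapCentered, ← withDensity_smul' _ _ ENNReal.ofReal_ne_top]
  refine withDensity_mono (Filter.Eventually.of_forall fun x => ?_)
  rw [Pi.smul_apply, smul_eq_mul, ← ENNReal.ofReal_mul (Real.exp_nonneg _), mul_left_comm]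
  exact ENNReal.ofReal_le_ofReal
    (mul_le_mul_of_nonneg_left (Real.exp_neg_abs_sub_div_le hb a₁ a₂ x) (by positivity))

theorem laplace_mechanism_privacy_general (b : ℝ) (hb : 0 < b) (a₁ a₂ : ℝ)
    (S : Set ℝ) :
    lapCentered b a₁ S ≤ ENNReal.ofReal (Real.exp (|a₁ - a₂| / b)) * lapCentered b a₂ S :=
  lapCentered_le_smul hb.le a₁ a₂ S

/-- Privacy guarantee of the Laplace mechanism for a single query: for every
measurable set `S`, the Laplace measures centered at `a₁` and `a₂` differ by a
multiplicative factor of at most `exp(|a₁ − a₂|/b)`. -/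
theorem laplace_mechanism_privacy (b : ℝ) (hb : 0 < b) (a₁ a₂ : ℝ)
    (S : Set ℝ) (hS : MeasurableSet S) :
    lapCentered b a₁ S ≤ ENNReal.ofReal (Real.exp (|a₁ - a₂| / b)) * lapCentered b a₂ S :=
  laplace_mechanism_privacy_general b hb a₁ a₂ S
end

section
/- Let x = (x¹, …, x^T) and y = (y¹, …, y^T) be streams of vectors in {−1,0,1}^d, both valid in the ``likes''-model, that are event-level neighboring: there exist a time step t* ∈ {1,…,T} and an item i* ∈ {1,…,d} such that x_i^t = y_i^t for all pairs (i,t) ≠ (i*,t*). Define the difference sequences diff^t(x) := CountDistinct(x)^t − CountDistinct(x)^{t−1} and diff^t(y) := CountDistinct(y)^t − CountDistinct(y)^{t−1} (with CountDistinct⁰ := 0). Then diff^t(x) = diff^t(y) for all t ≠ t*, and |diff^{t*}(x) − diff^{t*}(y)| ≤ 1. -/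
/-- `elemIndicator x t i = 1` iff item `i` is present at time `t`, i.e. iff the
prefix sum `∑_{t' ≤ t} x_i^{t'}` is positive (with `elemIndicator x 0 i = 0`). -/
def elemIndicator (x : ℕ → ℕ → ℤ) (t i : ℕ) : ℕ :=
  if 0 < ∑ t' ∈ Finset.Icc 1 t, x t' i then 1 else 0

/-- `countDistinct d x t` is the number of distinct elements present at time `t`. -/
def countDistinct (d : ℕ) (x : ℕ → ℕ → ℤ) (t : ℕ) : ℕ :=
  ∑ i ∈ Finset.Icc 1 d, elemIndicator x t i

/-- The total flippancy `K(x)`: the total number of times any item switches between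
a zero and a non-zero count. -/
def totalFlippancy (d T : ℕ) (x : ℕ → ℕ → ℤ) : ℕ :=
  ∑ i ∈ Finset.Icc 1 d, ∑ t ∈ Finset.Icc 1 T,
    if elemIndicator x t i ≠ elemIndicator x (t - 1) i then 1 else 0

/-- In the "likes"-model, the difference sequence of `countDistinct` has
event-level sensitivity 1: for event-level neighboring streams, the difference
sequences agree everywhere except possibly at the differing time step `tstar`,
where they differ by at most 1. -/
theorem diff_sequence_event_level_sensitivity (d T : ℕ) (x y : ℕ → ℕ → ℤ)
    (hx : ∀ t ∈ Finset.Icc 1 T, ∀ i ∈ Finset.Icc 1 d, x t i ∈ ({-1, 0, 1} : Set ℤ))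
    (hy : ∀ t ∈ Finset.Icc 1 T, ∀ i ∈ Finset.Icc 1 d, y t i ∈ ({-1, 0, 1} : Set ℤ))
    (hxlikes : ∀ i ∈ Finset.Icc 1 d, ∀ t ∈ Finset.Icc 1 T,
      (∑ t' ∈ Finset.Icc 1 t, x t' i) ∈ ({0, 1} : Set ℤ))
    (hylikes : ∀ i ∈ Finset.Icc 1 d, ∀ t ∈ Finset.Icc 1 T,
      (∑ t' ∈ Finset.Icc 1 t, y t' i) ∈ ({0, 1} : Set ℤ))
    (tstar : ℕ) (htstar : tstar ∈ Finset.Icc 1 T)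
    (istar : ℕ) (histar : istar ∈ Finset.Icc 1 d)
    (hnbr : ∀ t ∈ Finset.Icc 1 T, ∀ i ∈ Finset.Icc 1 d,
      (i, t) ≠ (istar, tstar) → x t i = y t i) :
    (∀ t ∈ Finset.Icc 1 T, t ≠ tstar →
        (countDistinct d x t : ℤ) - (countDistinct d x (t - 1) : ℤ)
          = (countDistinct d y t : ℤ) - (countDistinct d y (t - 1) : ℤ))
      ∧ |((countDistinct d x tstar : ℤ) - (countDistinct d x (tstar - 1) : ℤ))
          - ((countDistinct d y tstar : ℤ) - (countDistinct d y (tstar - 1) : ℤ))| ≤ 1 := by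
  rw [Finset.mem_Icc] at htstar
  have histar' := histar
  rw [Finset.mem_Icc] at histar'
  -- prefix sums agree when i ≠ istar or t < tstar
  have hpre : ∀ t, t ≤ T → ∀ i ∈ Finset.Icc 1 d, (i ≠ istar ∨ t < tstar) →
      ∑ t' ∈ Finset.Icc 1 t, x t' i = ∑ t' ∈ Finset.Icc 1 t, y t' i := by
    intro t ht i hi hcond
    refine Finset.sum_congr rfl fun t' ht' => ?_
    rw [Finset.mem_Icc] at ht'
    refine hnbr t' (Finset.mem_Icc.mpr ⟨ht'.1, le_trans ht'.2 ht⟩) i hi ?_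
    intro hc
    rw [Prod.mk.injEq] at hc
    rcases hcond with h | h <;> omega
  have hE : ∀ t, t ≤ T → ∀ i ∈ Finset.Icc 1 d, (i ≠ istar ∨ t < tstar) →
      elemIndicator x t i = elemIndicator y t i := by
    intro t ht i hi hc
    unfold elemIndicator
    rw [hpre t ht i hi hc]
  -- countDistinct difference reduces to the istar indicator difference
  have hcd : ∀ t, t ≤ T →
      (countDistinct d x t : ℤ) - (countDistinct d y t : ℤ)
        = (elemIndicator x t istar : ℤ) - (elemIndicator y t istar : ℤ) := by
    intro t ht
    unfold countDistinct
    push_cast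
    rw [← Finset.sum_sub_distrib]
    refine Finset.sum_eq_single_of_mem istar histar fun i hi hne => ?_
    rw [hE t ht i hi (Or.inl hne)]
    ring
  -- under the likes constraint, the indicator equals the prefix sum
  have hEeq : ∀ (z : ℕ → ℕ → ℤ),
      (∀ i ∈ Finset.Icc 1 d, ∀ t ∈ Finset.Icc 1 T,
        (∑ t' ∈ Finset.Icc 1 t, z t' i) ∈ ({0, 1} : Set ℤ)) →
      ∀ t, 1 ≤ t → t ≤ T →
      (elemIndicator z t istar : ℤ) = ∑ t' ∈ Finset.Icc 1 t, z t' istar := by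
    intro z hz t h1 h2
    have hs := hz istar histar t (Finset.mem_Icc.mpr ⟨h1, h2⟩)
    simp only [Set.mem_insert_iff, Set.mem_singleton_iff] at hs
    unfold elemIndicator
    rcases hs with h | h <;> rw [h] <;> simp
  -- indicator bounds
  have hb : ∀ (z : ℕ → ℕ → ℤ) t, (elemIndicator z t istar : ℤ) ≤ 1 := by
    intro z t
    unfold elemIndicator
    split <;> simp
  have hb0 : ∀ (z : ℕ → ℕ → ℤ) t, (0 : ℤ) ≤ (elemIndicator z t istar : ℤ) := by
    intro z t; positivity
  -- the step identity for t > tstar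
  have hstep : ∀ t, tstar < t → t ≤ T →
      (elemIndicator x t istar : ℤ) - (elemIndicator y t istar : ℤ)
        = (elemIndicator x (t - 1) istar : ℤ) - (elemIndicator y (t - 1) istar : ℤ) := by
    intro t h1 h2
    rw [hEeq x hxlikes t (by omega) h2, hEeq y hylikes t (by omega) h2,
        hEeq x hxlikes (t - 1) (by omega) (by omega),
        hEeq y hylikes (t - 1) (by omega) (by omega)]
    have ht : t - 1 + 1 = t := by omega
    have hx1 := Finset.sum_Icc_succ_top (a := 1) (b := t - 1) (by omega) (fun t' => x t' istar)
    have hy1 := Finset.sum_Icc_succ_top (a := 1) (b := t - 1) (by omega) (fun t' => y t' istar)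
    rw [ht] at hx1 hy1
    have hxy : x t istar = y t istar := by
      refine hnbr t (Finset.mem_Icc.mpr ⟨by omega, h2⟩) istar histar ?_
      intro hc
      rw [Prod.mk.injEq] at hc
      omega
    rw [hx1, hy1, hxy]
    ring
  constructor
  · intro t ht hne
    rw [Finset.mem_Icc] at ht
    have h1 := hcd t ht.2
    have h2 := hcd (t - 1) (by omega)
    rcases lt_or_gt_of_ne hne with h | h
    · have e1 := hE t ht.2 istar histar (Or.inr h)
      have e2 := hE (t - 1) (by omega) istar histar (Or.inr (by omega))
      have e1' : (elemIndicator x t istar : ℤ) = (elemIndicator y t istar : ℤ) := by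
        exact_mod_cast e1
      have e2' : (elemIndicator x (t - 1) istar : ℤ)
          = (elemIndicator y (t - 1) istar : ℤ) := by
        exact_mod_cast e2
      linarith
    · have hs := hstep t h ht.2
      linarith
  · have h1 := hcd tstar htstar.2
    have h2 := hcd (tstar - 1) (by omega)
    have e2 := hE (tstar - 1) (by omega) istar histar (Or.inr (by omega))
    have e2' : (elemIndicator x (tstar - 1) istar : ℤ)
        = (elemIndicator y (tstar - 1) istar : ℤ) := by
      exact_mod_cast e2
    have key : (countDistinct d x tstar : ℤ) - (countDistinct d x (tstar - 1) : ℤ)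
        - ((countDistinct d y tstar : ℤ) - (countDistinct d y (tstar - 1) : ℤ))
        = (elemIndicator x tstar istar : ℤ) - (elemIndicator y tstar istar : ℤ) := by
      linarith
    rw [key, abs_le]
    constructor
    · linarith [hb y tstar, hb0 x tstar]
    · linarith [hb x tstar, hb0 y tstar]
end

section
/- Let x = (x¹, …, x^T) and y = (y¹, …, y^T) be streams of vectors in {−1,0,1}^d, both valid in the ``likes''-model, that are item-level neighboring with respect to item i ∈ {1,…,d}: x_j^t = y_j^t for all t and all j ≠ i. Define streams z and w of length T+1 by prepending the vector −e_i (which has entry −1 in coordinate i and 0 elsewhere): z¹ = w¹ = −e_i, z^{t+1} = x^t and w^{t+1} = y^t for t ∈ {1,…,T}. Then CountDistinct(z)^t = CountDistinct(w)^t for every t ∈ {1,…,T+1}. -/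
lemma sum_Icc_shift (f : ℕ → ℤ) (s : ℕ) :
    ∑ t' ∈ Finset.Icc 1 (s + 1), f t' = f 1 + ∑ t' ∈ Finset.Icc 1 s, f (t' + 1) := by
  induction s with
  | zero => simp
  | succ n ih =>
    rw [Finset.sum_Icc_succ_top (by omega), ih, Finset.sum_Icc_succ_top (by omega)]
    ring

/-- Key step of the reduction in Theorem 4: prepending `−e_i` to two item-level
neighboring "likes"-model streams (neighboring in item `i`) yields two streams
with identical `countDistinct` values at all time steps. -/
theorem prepend_neg_ei_eq_countDistinct (d T : ℕ) (x y : ℕ → ℕ → ℤ)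
    (hx : ∀ t ∈ Finset.Icc 1 T, ∀ j ∈ Finset.Icc 1 d, x t j ∈ ({-1, 0, 1} : Set ℤ))
    (hy : ∀ t ∈ Finset.Icc 1 T, ∀ j ∈ Finset.Icc 1 d, y t j ∈ ({-1, 0, 1} : Set ℤ))
    (hxlikes : ∀ j ∈ Finset.Icc 1 d, ∀ t ∈ Finset.Icc 1 T,
      (∑ t' ∈ Finset.Icc 1 t, x t' j) ∈ ({0, 1} : Set ℤ))
    (hylikes : ∀ j ∈ Finset.Icc 1 d, ∀ t ∈ Finset.Icc 1 T,
      (∑ t' ∈ Finset.Icc 1 t, y t' j) ∈ ({0, 1} : Set ℤ))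
    (i : ℕ) (hi : i ∈ Finset.Icc 1 d)
    (hnbr : ∀ t ∈ Finset.Icc 1 T, ∀ j, j ≠ i → x t j = y t j)
    (z w : ℕ → ℕ → ℤ)
    (hz1 : ∀ j, z 1 j = if j = i then -1 else 0)
    (hw1 : ∀ j, w 1 j = if j = i then -1 else 0)
    (hz : ∀ t ∈ Finset.Icc 1 T, ∀ j, z (t + 1) j = x t j)
    (hw : ∀ t ∈ Finset.Icc 1 T, ∀ j, w (t + 1) j = y t j) :
    ∀ t ∈ Finset.Icc 1 (T + 1), countDistinct d z t = countDistinct d w t := by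
  intro t ht
  simp only [Finset.mem_Icc] at ht
  obtain ⟨ht1, ht2⟩ := ht
  obtain ⟨s, rfl⟩ : ∃ s, t = s + 1 := ⟨t - 1, by omega⟩
  have hs : s ≤ T := by omega
  -- prefix sums of z and w
  have hzsum : ∀ j, ∑ t' ∈ Finset.Icc 1 (s + 1), z t' j
      = z 1 j + ∑ t' ∈ Finset.Icc 1 s, x t' j := by
    intro j
    rw [sum_Icc_shift]
    congr 1
    apply Finset.sum_congr rfl
    intro t' ht'
    simp only [Finset.mem_Icc] at ht'
    exact hz t' (Finset.mem_Icc.2 ⟨ht'.1, le_trans ht'.2 hs⟩) j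
  have hwsum : ∀ j, ∑ t' ∈ Finset.Icc 1 (s + 1), w t' j
      = w 1 j + ∑ t' ∈ Finset.Icc 1 s, y t' j := by
    intro j
    rw [sum_Icc_shift]
    congr 1
    apply Finset.sum_congr rfl
    intro t' ht'
    simp only [Finset.mem_Icc] at ht'
    exact hw t' (Finset.mem_Icc.2 ⟨ht'.1, le_trans ht'.2 hs⟩) j
  unfold countDistinct
  apply Finset.sum_congr rfl
  intro j hj
  unfold elemIndicator
  rw [hzsum, hwsum, hz1, hw1]
  by_cases hji : j = i
  · subst hji
    have h1 : (if j = j then (-1:ℤ) else 0) = -1 := if_pos rfl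
    rw [h1]
    -- both prefix sums are ≤ 0
    have hxS : (∑ t' ∈ Finset.Icc 1 s, x t' j) ≤ 1 := by
      rcases Nat.eq_zero_or_pos s with hs0 | hs0
      · subst hs0; simp
      · have := hxlikes j hi s (Finset.mem_Icc.2 ⟨hs0, hs⟩)
        rcases this with h | h <;> simp_all
    have hyS : (∑ t' ∈ Finset.Icc 1 s, y t' j) ≤ 1 := by
      rcases Nat.eq_zero_or_pos s with hs0 | hs0
      · subst hs0; simp
      · have := hylikes j hi s (Finset.mem_Icc.2 ⟨hs0, hs⟩)
        rcases this with h | h <;> simp_all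
    rw [if_neg (by omega), if_neg (by omega)]
  · have : ∑ t' ∈ Finset.Icc 1 s, x t' j = ∑ t' ∈ Finset.Icc 1 s, y t' j := by
      apply Finset.sum_congr rfl
      intro t' ht'
      simp only [Finset.mem_Icc] at ht'
      exact hnbr t' (Finset.mem_Icc.2 ⟨ht'.1, le_trans ht'.2 hs⟩) j hji
    rw [this]
end
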